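/- arXiv:1408.5065 — 4 statements merged into one kernel-verified Lean document; each statement's English description precedes it below -/
import Mathlib

section
/- Let 0 ≤ ξ ≤ ζ < ω₁ be countable ordinals. Then there exists n ∈ ℕ such that every E ∈ 𝓢_ξ with n ≤ min E satisfies E ∈ 𝓢_ζ. -/
/-! Call `F` a tail subset of `G` if every member of `F` lying above some fixed `n` belongs to `G`.
This relation is transitive, and it holds from `𝓢_η` to `𝓢_{η+1}` (a set `E ∈ 𝓢_η` with
`min E ≥ 1` is a single admissible block of `𝓢₁[𝓢_η]`) and from `𝓢_{ζ_k}` to `𝓢_ζ` at a limit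
`ζ` (with `n = k`). Since `ζ_k ↑ ζ`, some `ζ_k` lies above `ξ`, and transfinite induction on `ζ`
concludes. -/

open Filter Topology

noncomputable section

/-- The first uncountable ordinal `ω₁`. -/
def omega1 : Ordinal := (Cardinal.aleph 1).ord

/-- The combinatorial operation `𝓕[𝓖]` on families of finite subsets of `ℕ`:
all unions `E₁ ∪ ⋯ ∪ Eₙ` with `E₁ < ⋯ < Eₙ` nonempty members of `𝓖` and
`(min Eᵢ)ᵢ ∈ 𝓕`. -/
def famOp (F G : Set (Finset ℕ)) : Set (Finset ℕ) :=
  {E | ∃ (n : ℕ) (Es : ℕ → Finset ℕ),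
    (∀ i < n, Es i ∈ G) ∧ (∀ i < n, (Es i).Nonempty) ∧
    (∀ i j : ℕ, i < j → j < n → ∀ a ∈ Es i, ∀ b ∈ Es j, a < b) ∧
    (Finset.image (fun i => sInf ((Es i : Set ℕ))) (Finset.range n) ∈ F) ∧
    E = (Finset.range n).biUnion Es}

/-- The first Schreier family `𝓢₁ = {E : |E| ≤ min E}`. -/
def schreierOne : Set (Finset ℕ) := {E : Finset ℕ | ∀ n ∈ E, E.card ≤ n}

/-- A system of Schreier families `(𝓢_ξ)` together with the fixed cofinal sequences
`(ξ_n)` used at countable limit ordinals: `𝓢_0 = {∅} ∪ {{n} : n ∈ ℕ}`,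
`𝓢_{ξ+1} = 𝓢₁[𝓢_ξ]`, and at a countable limit `ξ`,
`𝓢_ξ = {E : ∃ n, n ≤ min E ∧ E ∈ 𝓢_{ξ_n}}` where `ξ_n ↑ ξ` and
`𝓢_{ξ_n} ⊆ 𝓢_{ξ_{n+1}}`. -/
structure SchreierSystem where
  S : Ordinal → Set (Finset ℕ)
  seq : Ordinal → ℕ → Ordinal
  S_zero : S 0 = {E : Finset ℕ | E = ∅ ∨ ∃ n : ℕ, E = {n}}
  S_succ : ∀ ξ : Ordinal, S (ξ + 1) = famOp schreierOne (S ξ)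
  seq_strictMono : ∀ ξ : Ordinal, ξ < omega1 → Order.IsSuccLimit ξ → StrictMono (seq ξ)
  seq_lt : ∀ ξ : Ordinal, ξ < omega1 → Order.IsSuccLimit ξ → ∀ n : ℕ, seq ξ n < ξ
  seq_iSup : ∀ ξ : Ordinal, ξ < omega1 → Order.IsSuccLimit ξ → (⨆ n : ℕ, seq ξ n) = ξ
  S_seq_mono : ∀ ξ : Ordinal, ξ < omega1 → Order.IsSuccLimit ξ → ∀ n : ℕ, S (seq ξ n) ⊆ S (seq ξ (n + 1))
  S_limit : ∀ ξ : Ordinal, ξ < omega1 → Order.IsSuccLimit ξ →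
    S ξ = {E : Finset ℕ | ∃ n : ℕ, (∀ m ∈ E, n ≤ m) ∧ E ∈ S (seq ξ n)}

def TailSubset (F G : Set (Finset ℕ)) : Prop :=
  ∃ n : ℕ, ∀ E ∈ F, (∀ m ∈ E, n ≤ m) → E ∈ G

namespace TailSubset

theorem of_subset {F G : Set (Finset ℕ)} (h : F ⊆ G) : TailSubset F G :=
  ⟨0, fun _ hE _ => h hE⟩

theorem trans {F G H : Set (Finset ℕ)} (hFG : TailSubset F G) (hGH : TailSubset G H) :
    TailSubset F H := by
  obtain ⟨n, hn⟩ := hFG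
  obtain ⟨k, hk⟩ := hGH
  refine ⟨max n k, fun E hE hmin => hk E (hn E hE fun m hm => ?_) fun m hm => ?_⟩
  · exact (le_max_left n k).trans (hmin m hm)
  · exact (le_max_right n k).trans (hmin m hm)

end TailSubset

theorem mem_famOp_schreierOne_of_mem {G : Set (Finset ℕ)} {E : Finset ℕ} (hE : E ∈ G)
    (hpos : ∀ m ∈ E, 1 ≤ m) : E ∈ famOp schreierOne G := by
  rcases E.eq_empty_or_nonempty with rfl | hne
  · exact ⟨0, fun _ => ∅, by simp, by simp, by omega, by simp [schreierOne], by simp⟩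
  refine ⟨1, fun _ => E, fun _ _ => hE, fun _ _ => hne, by omega, ?_, by simp⟩
  have hmin : sInf (E : Set ℕ) ∈ E := Nat.sInf_mem (s := (E : Set ℕ)) (by exact_mod_cast hne)
  intro n hn
  simp only [Finset.range_one, Finset.image_singleton, Finset.mem_singleton] at hn
  simpa [hn] using hpos _ hmin

theorem tailSubset_famOp_schreierOne (G : Set (Finset ℕ)) :
    TailSubset G (famOp schreierOne G) :=
  ⟨1, fun _ hE hpos => mem_famOp_schreierOne_of_mem hE hpos⟩

namespace SchreierSystem

variable (SS : SchreierSystem) {ζ : Ordinal} (hζ : ζ < omega1) (hlim : Order.IsSuccLimit ζ)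
include hζ hlim

theorem tailSubset_S_seq (k : ℕ) : TailSubset (SS.S (SS.seq ζ k)) (SS.S ζ) := by
  refine ⟨k, fun E hE hmin => ?_⟩
  rw [SS.S_limit ζ hζ hlim]
  exact ⟨k, hmin, hE⟩

theorem exists_le_seq {ξ : Ordinal} (hξ : ξ < ζ) : ∃ k : ℕ, ξ ≤ SS.seq ζ k := by
  by_contra! h
  have hsup : (⨆ k : ℕ, SS.seq ζ k) ≤ ξ := ciSup_le' fun k => (h k).le
  rw [SS.seq_iSup ζ hζ hlim] at hsup
  exact hξ.not_ge hsup

end SchreierSystem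

/-- For countable ordinals `ξ ≤ ζ < ω₁` there exists `n ∈ ℕ` such that
every `E ∈ 𝓢_ξ` with `n ≤ min E` satisfies `E ∈ 𝓢_ζ`. -/
theorem statement0 (SS : SchreierSystem) (ξ ζ : Ordinal) (hle : ξ ≤ ζ) (hζ : ζ < omega1) :
    ∃ n : ℕ, ∀ E ∈ SS.S ξ, (∀ m ∈ E, n ≤ m) → E ∈ SS.S ζ := by
  show TailSubset (SS.S ξ) (SS.S ζ)
  induction ζ using WellFoundedLT.induction with
  | _ ζ IH =>
  rcases hle.eq_or_lt with rfl | hlt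
  · exact .of_subset le_rfl
  rcases Ordinal.zero_or_succ_or_isSuccLimit ζ with rfl | ⟨η, rfl⟩ | hlim
  · exact absurd hlt not_lt_zero
  · have hη : η < Order.succ η := Order.lt_succ η
    have hξη : TailSubset (SS.S ξ) (SS.S η) :=
      IH η hη (Order.lt_succ_iff.mp hlt) (hη.trans hζ)
    rw [Order.succ_eq_add_one, SS.S_succ]
    exact hξη.trans (tailSubset_famOp_schreierOne _)
  · obtain ⟨k, hk⟩ := SS.exists_le_seq hζ hlim hlt
    have hseq := SS.seq_lt ζ hζ hlim k
    exact (IH _ hseq hk (hseq.trans hζ)).trans (SS.tailSubset_S_seq hζ hlim k)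
end
end

section
/- Let 0 ≤ ξ, ζ < ω₁ be countable ordinals. Then there exists an infinite L ⊆ ℕ such that 𝓢_ξ[𝓢_ζ](L) ⊆ 𝓢_{ζ+ξ}, and this inclusion still holds when L is replaced by any spread of L. -/
open Filter Topology

noncomputable section

/-- The image family `𝓕(g) = {g(E) : E ∈ 𝓕}` of a family under a map `g : ℕ → ℕ`
(for a strictly monotone `g` this is `𝓕(M)` where `M = g(ℕ)`). -/
def famMap (g : ℕ → ℕ) (F : Set (Finset ℕ)) : Set (Finset ℕ) :=
  (fun E : Finset ℕ => E.image g) '' F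

/-!
Induction on `ξ`, with `ζ` fixed, for a local strengthening: some `L` is such that
`L'(E) ∈ 𝓢_{ζ+ξ}` for every `E ∈ 𝓢_ξ[𝓢_ζ]` and every increasing `L'` dominating `L` on `E`.
For `ξ = 0`, `𝓢_0[𝓢_ζ] ⊆ 𝓢_ζ ∪ {∅}` and `𝓢_ζ` is spreading. At successors,
`𝓢_{ξ+1}[𝓢_ζ] ⊆ 𝓢_1[𝓢_ξ[𝓢_ζ]]` and `𝓢_1` is spreading. At a limit `ξ`, a set of `𝓢_ξ[𝓢_ζ]`
lies in `𝓢_{ξ_n}[𝓢_ζ]` for some `n ≤ min E`, hence is sent into `𝓢_{ζ+ξ_n}` by spreads of `L_n`;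
and `𝓢_{ζ+ξ_n}` is contained in `𝓢_{ζ+ξ}` above some threshold `N_n`. Since only `k ≥ n`
matters for such `E`, one diagonal `L` with `L k ≥ L_n k + N_n` for `n ≤ k` serves all `n`.
-/

open Finset

namespace Finset

lemma sInf_coe_mem {s : Finset ℕ} (hs : s.Nonempty) : sInf (s : Set ℕ) ∈ s :=
  Nat.sInf_mem (coe_nonempty.2 hs)

lemma sInf_coe_lt_sInf_coe {s t : Finset ℕ} (hs : s.Nonempty) (ht : t.Nonempty)
    (hst : ∀ a ∈ s, ∀ b ∈ t, a < b) : sInf (s : Set ℕ) < sInf (t : Set ℕ) :=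
  hst _ (sInf_coe_mem hs) _ (sInf_coe_mem ht)

lemma sInf_coe_image {g : ℕ → ℕ} (hg : Monotone g) {s : Finset ℕ} (hs : s.Nonempty) :
    sInf (s.image g : Set ℕ) = g (sInf (s : Set ℕ)) := by
  refine le_antisymm (Nat.sInf_le (mem_image_of_mem g (sInf_coe_mem hs))) ?_
  obtain ⟨a, ha, hga⟩ := mem_image.1 (sInf_coe_mem (hs.image g))
  rw [← hga]
  exact hg (Nat.sInf_le ha)

lemma sInf_coe_biUnion {I : Finset ℕ} {Es : ℕ → Finset ℕ} (hne : ∀ i ∈ I, (Es i).Nonempty) :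
    sInf (I.biUnion Es : Set ℕ) = sInf (I.image fun i => sInf (Es i : Set ℕ) : Set ℕ) := by
  rcases I.eq_empty_or_nonempty with rfl | hI
  · simp
  apply le_antisymm
  · obtain ⟨i, hi, hmin⟩ := mem_image.1 (sInf_coe_mem (hI.image fun i => sInf (Es i : Set ℕ)))
    rw [← hmin]
    exact Nat.sInf_le (mem_biUnion.2 ⟨i, hi, sInf_coe_mem (hne i hi)⟩)
  · obtain ⟨i, hi, hmin⟩ := mem_biUnion.1 (sInf_coe_mem (hI.biUnion hne))
    exact (Nat.sInf_le (mem_image_of_mem _ hi)).trans (Nat.sInf_le hmin)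

lemma image_nth_range_card (I : Finset ℕ) : (range #I).image (Nat.nth (· ∈ I)) = I := by
  apply coe_injective
  rw [coe_image, coe_range]
  convert Nat.image_nth_Iio_card I.finite_toSet <;> simp

end Finset

lemma add_lt_omega1 {a b : Ordinal} (ha : a < omega1) (hb : b < omega1) : a + b < omega1 :=
  Ordinal.isPrincipal_add_ord (Cardinal.aleph0_le_aleph 1) ha hb

lemma exists_strictMono_dominating_diagonal (f : ℕ → ℕ → ℕ) :
    ∃ L : ℕ → ℕ, StrictMono L ∧ ∀ n k, n ≤ k → f n k ≤ L k := by
  refine ⟨fun k => k + ∑ j ∈ range (k + 1), ∑ n ∈ range (j + 1), f n j,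
    strictMono_nat_of_lt_succ fun k => ?_, fun n k hnk => ?_⟩
  · rw [sum_range_succ _ (k + 1)]
    omega
  · calc f n k ≤ ∑ n ∈ range (k + 1), f n k :=
          single_le_sum (f := fun n => f n k) (fun _ _ => Nat.zero_le _)
            (mem_range.2 (Nat.lt_succ_of_le hnk))
      _ ≤ ∑ j ∈ range (k + 1), ∑ n ∈ range (j + 1), f n j :=
          single_le_sum (f := fun j => ∑ n ∈ range (j + 1), f n j)
            (fun _ _ => Nat.zero_le _) (self_mem_range_succ k)
      _ ≤ _ := Nat.le_add_left _ _

section famOp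

variable {F G H : Set (Finset ℕ)}

lemma empty_mem_famOp (hF : ∅ ∈ F) : ∅ ∈ famOp F G :=
  ⟨0, fun _ => ∅, by simp, by simp, by simp, by simpa using hF, by simp⟩

lemma mem_famOp_of_finset (I : Finset ℕ) (Es : ℕ → Finset ℕ) (hG : ∀ i ∈ I, Es i ∈ G)
    (hne : ∀ i ∈ I, (Es i).Nonempty)
    (hlt : ∀ i ∈ I, ∀ j ∈ I, i < j → ∀ a ∈ Es i, ∀ b ∈ Es j, a < b)
    (hF : I.image (fun i => sInf (Es i : Set ℕ)) ∈ F) : I.biUnion Es ∈ famOp F G := by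
  have hfin : (Set.ofPred (· ∈ I)).Finite := I.finite_toSet
  have hcard : #hfin.toFinset = #I := by simp
  have hmem : ∀ i < #I, Nat.nth (· ∈ I) i ∈ I := fun i hi =>
    Nat.nth_mem_of_lt_card hfin (hcard ▸ hi)
  refine ⟨#I, fun i => Es (Nat.nth (· ∈ I) i), fun i hi => hG _ (hmem i hi),
    fun i hi => hne _ (hmem i hi), fun i j hij hj => hlt _ (hmem i (hij.trans hj)) _ (hmem j hj)
      (Nat.nth_lt_nth_of_lt_card hfin hij (hcard ▸ hj)), ?_, ?_⟩
  · rw [← I.image_nth_range_card, image_image] at hF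
    exact hF
  · nth_rw 1 [← I.image_nth_range_card]
    rw [image_biUnion]

lemma famOp_famOp_subset : famOp (famOp F G) H ⊆ famOp F (famOp G H) := by
  rintro _ ⟨n, Es, hH, hne, hlt, ⟨k, Ms, hG, hMne, hMlt, hF, hM⟩, rfl⟩
  set f : ℕ → ℕ := fun i => sInf (Es i : Set ℕ)
  have hf : ∀ i j, i < j → j < n → f i < f j := fun i j hij hj =>
    sInf_coe_lt_sInf_coe (hne i (hij.trans hj)) (hne j hj) (hlt i j hij hj)
  -- the `j`-th new block gathers the old blocks whose minimum lies in `Ms j`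
  set Is : ℕ → Finset ℕ := fun j => (range n).filter (f · ∈ Ms j)
  have hIs_lt : ∀ j ∈ range k, ∀ i ∈ Is j, i < n := fun j _ i hi => mem_range.1 (mem_filter.1 hi).1
  have hIs_image : ∀ j ∈ range k, (Is j).image f = Ms j := by
    intro j hj
    ext m
    refine ⟨fun hm => ?_, fun hm => ?_⟩
    · obtain ⟨i, hi, rfl⟩ := mem_image.1 hm
      exact (mem_filter.1 hi).2
    · obtain ⟨i, hi, rfl⟩ := mem_image.1 (hM ▸ mem_biUnion.2 ⟨j, hj, hm⟩)
      exact mem_image_of_mem f (mem_filter.2 ⟨hi, hm⟩)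
  have hIs_ordered : ∀ j j', j < j' → j' < k → ∀ i ∈ Is j, ∀ i' ∈ Is j', i < i' := by
    intro j j' hjj' hj' i hi i' hi'
    have hfi := hMlt j j' hjj' hj' _ (mem_filter.1 hi).2 _ (mem_filter.1 hi').2
    by_contra! hi'i
    rcases hi'i.eq_or_lt with rfl | hlt'
    · exact hfi.false
    · exact (hf i' i hlt' (hIs_lt j (mem_range.2 (hjj'.trans hj')) i hi)).asymm hfi
  have hIs_cover : (range k).biUnion Is = range n := by
    refine Subset.antisymm (biUnion_subset.2 fun j _ => filter_subset _ _) fun i hi => ?_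
    obtain ⟨j, hj, hfi⟩ := mem_biUnion.1 (hM ▸ mem_image_of_mem f hi)
    exact mem_biUnion.2 ⟨j, hj, mem_filter.2 ⟨hi, hfi⟩⟩
  have hIs_min : ∀ j ∈ range k, sInf ((Is j).biUnion Es : Set ℕ) = sInf (Ms j : Set ℕ) := by
    intro j hj
    rw [sInf_coe_biUnion fun i hi => hne i (hIs_lt j hj i hi), hIs_image j hj]
  refine ⟨k, fun j => (Is j).biUnion Es, fun j hj => ?_, fun j hj => ?_, ?_, ?_, ?_⟩
  · refine mem_famOp_of_finset (Is j) Es (fun i hi => hH i (hIs_lt j (mem_range.2 hj) i hi))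
      (fun i hi => hne i (hIs_lt j (mem_range.2 hj) i hi))
      (fun i _ i' hi' hii' => hlt i i' hii' (hIs_lt j (mem_range.2 hj) i' hi')) ?_
    rw [hIs_image j (mem_range.2 hj)]
    exact hG j hj
  · obtain ⟨m, hm⟩ := hMne j hj
    obtain ⟨i, hi, -⟩ := mem_image.1 ((hIs_image j (mem_range.2 hj)).symm ▸ hm)
    exact (hne i (hIs_lt j (mem_range.2 hj) i hi)).mono (subset_biUnion_of_mem Es hi)
  · intro j j' hjj' hj' a ha b hb
    obtain ⟨i, hi, hai⟩ := mem_biUnion.1 ha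
    obtain ⟨i', hi', hbi'⟩ := mem_biUnion.1 hb
    exact hlt i i' (hIs_ordered j j' hjj' hj' i hi i' hi') (hIs_lt j' (mem_range.2 hj') i' hi')
      a hai b hbi'
  · rwa [image_congr fun j hj => hIs_min j (mem_coe.1 hj)]
  · rw [← biUnion_biUnion, hIs_cover]

lemma image_mem_famOp {g : ℕ → ℕ} (hg : StrictMono g) (hF : ∀ M ∈ F, M.image g ∈ F)
    {E : Finset ℕ} (hE : E ∈ famOp F G) (hG : ∀ B ∈ G, B ⊆ E → B.image g ∈ H) :
    E.image g ∈ famOp F H := by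
  obtain ⟨n, Es, hEs, hne, hlt, hmin, rfl⟩ := hE
  refine ⟨n, fun i => (Es i).image g, fun i hi => hG _ (hEs i hi) ?_,
    fun i hi => (hne i hi).image g, ?_, ?_, biUnion_image⟩
  · exact subset_biUnion_of_mem Es (mem_range.2 hi)
  · intro i j hij hj _ hx _ hy
    obtain ⟨a, ha, rfl⟩ := mem_image.1 hx
    obtain ⟨b, hb, rfl⟩ := mem_image.1 hy
    exact hg (hlt i j hij hj a ha b hb)
  · have hmins : (range n).image (fun i => sInf ((Es i).image g : Set ℕ)) =
        ((range n).image fun i => sInf (Es i : Set ℕ)).image g := by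
      rw [image_image]
      exact image_congr fun i hi => sInf_coe_image hg.monotone (hne i (mem_range.1 hi))
    rw [hmins]
    exact hF _ hmin

lemma famOp_singletons_subset :
    famOp {E : Finset ℕ | E = ∅ ∨ ∃ n : ℕ, E = {n}} G ⊆ insert ∅ G := by
  rintro _ ⟨n, Es, hG, hne, hlt, hmin, rfl⟩
  rcases n with _ | _ | n
  · simp
  · simpa using Or.inr (hG 0 one_pos)
  · have h01 :=
      sInf_coe_lt_sInf_coe (hne 0 (by omega)) (hne 1 (by omega)) (hlt 0 1 one_pos (by omega))
    have h0 := mem_image_of_mem (fun i => sInf (Es i : Set ℕ)) (mem_range.2 (by omega : 0 < n + 2))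
    have h1 := mem_image_of_mem (fun i => sInf (Es i : Set ℕ)) (mem_range.2 (by omega : 1 < n + 2))
    rcases hmin with hmin | ⟨m, hmin⟩ <;> rw [hmin] at h0 h1 <;> simp at h0 h1
    omega

lemma image_mem_schreierOne {g : ℕ → ℕ} (hg : StrictMono g) {M : Finset ℕ}
    (hM : M ∈ schreierOne) : M.image g ∈ schreierOne := by
  intro b hb
  obtain ⟨m, hm, rfl⟩ := mem_image.1 hb
  calc #(M.image g) ≤ #M := card_image_le
    _ ≤ m := hM m hm
    _ ≤ g m := hg.le_apply

lemma mem_famOp_schreierOne_of_mem_s2 {B : Finset ℕ} (hB : B ∈ G) (hpos : ∀ a ∈ B, 1 ≤ a) :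
    B ∈ famOp schreierOne G := by
  rcases B.eq_empty_or_nonempty with rfl | hne
  · exact empty_mem_famOp (by simp [schreierOne])
  · refine ⟨1, fun _ => B, fun _ _ => hB, fun _ _ => hne, by omega, ?_, by simp⟩
    simpa [schreierOne] using hpos _ (sInf_coe_mem hne)

end famOp

namespace SchreierSystem

variable (SS : SchreierSystem)

lemma exists_lt_seq {β α : Ordinal} (hβ : β < omega1) (hlim : Order.IsSuccLimit β) (hα : α < β) :
    ∃ m : ℕ, α < SS.seq β m := by
  rw [← SS.seq_iSup β hβ hlim] at hα
  exact Ordinal.lt_iSup_iff.1 hα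

lemma image_mem {β : Ordinal} (hβ : β < omega1) {g : ℕ → ℕ} (hg : StrictMono g) {E : Finset ℕ}
    (hE : E ∈ SS.S β) : E.image g ∈ SS.S β := by
  induction β using Ordinal.limitRecOn generalizing E with
  | zero =>
    rw [SS.S_zero] at hE ⊢
    rcases hE with rfl | ⟨m, rfl⟩ <;> simp
  | add_one γ ih =>
    rw [SS.S_succ] at hE ⊢
    exact image_mem_famOp hg (fun M => image_mem_schreierOne hg) hE
      fun B hB _ => ih ((lt_add_one γ).trans hβ) hB
  | limit β hlim ih =>
    rw [SS.S_limit β hβ hlim] at hE ⊢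
    obtain ⟨m, hm, hEm⟩ := hE
    have hseq := SS.seq_lt β hβ hlim m
    refine ⟨m, fun b hb => ?_, ih _ hseq (hseq.trans hβ) hEm⟩
    obtain ⟨a, ha, rfl⟩ := mem_image.1 hb
    exact (hm a ha).trans hg.le_apply

lemma exists_forall_mem_of_lt {β : Ordinal} (hβ : β < omega1) {α : Ordinal} (hαβ : α < β) :
    ∃ N : ℕ, ∀ E ∈ SS.S α, (∀ a ∈ E, N ≤ a) → E ∈ SS.S β := by
  induction β using Ordinal.limitRecOn with
  | zero => exact absurd hαβ (not_lt_zero (a := α))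
  | add_one γ ih =>
    obtain ⟨N, hN⟩ : ∃ N : ℕ, ∀ E ∈ SS.S α, (∀ a ∈ E, N ≤ a) → E ∈ SS.S γ := by
      rcases (Order.lt_add_one_iff.1 hαβ).eq_or_lt with rfl | hαγ
      · exact ⟨0, fun E hE _ => hE⟩
      · exact ih ((lt_add_one γ).trans hβ) hαγ
    refine ⟨N + 1, fun E hE hEN => ?_⟩
    rw [SS.S_succ]
    exact mem_famOp_schreierOne_of_mem_s2 (hN E hE fun a ha => (hEN a ha).trans' (by omega))
      fun a ha => (hEN a ha).trans' (by omega)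
  | limit β hlim ih =>
    obtain ⟨m, hm⟩ := SS.exists_lt_seq hβ hlim hαβ
    have hseq := SS.seq_lt β hβ hlim m
    obtain ⟨N, hN⟩ := ih _ hseq (hseq.trans hβ) hm
    refine ⟨max N m, fun E hE hEN => ?_⟩
    rw [SS.S_limit β hβ hlim]
    exact ⟨m, fun a ha => (le_max_right N m).trans (hEN a ha),
      hN E hE fun a ha => (le_max_left N m).trans (hEN a ha)⟩

lemma empty_mem {β : Ordinal} (hβ : β < omega1) : ∅ ∈ SS.S β := by
  have h0 : ∅ ∈ SS.S 0 := by simp [SS.S_zero]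
  rcases eq_zero_or_pos β with rfl | hpos
  · exact h0
  · obtain ⟨N, hN⟩ := SS.exists_forall_mem_of_lt hβ hpos
    exact hN ∅ h0 (by simp)

def IsSpreadThreshold (ξ ζ : Ordinal) (L : ℕ → ℕ) : Prop :=
  ∀ E ∈ famOp (SS.S ξ) (SS.S ζ), ∀ L' : ℕ → ℕ, StrictMono L' → (∀ k ∈ E, L k ≤ L' k) →
    E.image L' ∈ SS.S (ζ + ξ)

variable {SS}

lemma isSpreadThreshold_zero {ζ : Ordinal} (hζ : ζ < omega1) (L : ℕ → ℕ) :
    SS.IsSpreadThreshold 0 ζ L := by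
  intro E hE L' hL' _
  rw [add_zero]
  rcases famOp_singletons_subset (SS.S_zero ▸ hE) with rfl | hE
  · simpa using SS.empty_mem hζ
  · exact SS.image_mem hζ hL' hE

lemma IsSpreadThreshold.add_one {γ ζ : Ordinal} {L : ℕ → ℕ} (hL : SS.IsSpreadThreshold γ ζ L) :
    SS.IsSpreadThreshold (γ + 1) ζ L := by
  intro E hE L' hL' hLL'
  rw [SS.S_succ] at hE
  rw [← add_assoc, SS.S_succ]
  exact image_mem_famOp hL' (fun M => image_mem_schreierOne hL') (famOp_famOp_subset hE)
    fun B hB hBE => hL B hB L' hL' fun k hk => hLL' k (hBE hk)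

lemma exists_isSpreadThreshold_of_isSuccLimit {ξ ζ : Ordinal} (hξ : ξ < omega1)
    (hlim : Order.IsSuccLimit ξ) (hζ : ζ < omega1) {Ls : ℕ → ℕ → ℕ}
    (hLs : ∀ n, SS.IsSpreadThreshold (SS.seq ξ n) ζ (Ls n)) :
    ∃ L : ℕ → ℕ, StrictMono L ∧ SS.IsSpreadThreshold ξ ζ L := by
  choose N hN using fun n => SS.exists_forall_mem_of_lt (add_lt_omega1 hζ hξ)
    ((add_lt_add_iff_left ζ).2 (SS.seq_lt ξ hξ hlim n))
  obtain ⟨L, hL, hdom⟩ := exists_strictMono_dominating_diagonal fun n k => Ls n k + N n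
  refine ⟨L, hL, ?_⟩
  rintro _ ⟨p, Es, hG, hne, hlt, hmin, rfl⟩ L' hL' hLL'
  rw [SS.S_limit ξ hξ hlim] at hmin
  obtain ⟨n, hn, hmin⟩ := hmin
  have hbound : ∀ k ∈ (range p).biUnion Es, Ls n k + N n ≤ L' k := by
    intro k hk
    obtain ⟨i, hi, hki⟩ := mem_biUnion.1 hk
    exact (hdom n k ((hn _ (mem_image_of_mem _ hi)).trans (Nat.sInf_le hki))).trans (hLL' k hk)
  refine hN n _ (hLs n _ ⟨p, Es, hG, hne, hlt, hmin, rfl⟩ L' hL' fun k hk => ?_) fun b hb => ?_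
  · exact (Nat.le_add_right _ _).trans (hbound k hk)
  · obtain ⟨k, hk, rfl⟩ := mem_image.1 hb
    exact (Nat.le_add_left _ _).trans (hbound k hk)

variable (SS)

lemma exists_isSpreadThreshold {ζ : Ordinal} (hζ : ζ < omega1) {ξ : Ordinal} (hξ : ξ < omega1) :
    ∃ L : ℕ → ℕ, StrictMono L ∧ SS.IsSpreadThreshold ξ ζ L := by
  induction ξ using Ordinal.limitRecOn with
  | zero => exact ⟨id, strictMono_id, isSpreadThreshold_zero hζ id⟩
  | add_one γ ih =>
    obtain ⟨L, hL, hγ⟩ := ih ((lt_add_one γ).trans hξ)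
    exact ⟨L, hL, hγ.add_one⟩
  | limit ξ hlim ih =>
    have hseq := SS.seq_lt ξ hξ hlim
    choose Ls _ hLs using fun n => ih _ (hseq n) ((hseq n).trans hξ)
    exact exists_isSpreadThreshold_of_isSuccLimit hξ hlim hζ hLs

end SchreierSystem

/-- For countable ordinals `ξ, ζ < ω₁` there is an infinite `L ⊆ ℕ`
(given by its increasing enumeration) such that `𝓢_ξ[𝓢_ζ](L) ⊆ 𝓢_{ζ+ξ}`, and the
inclusion persists when `L` is replaced by any spread `L'` of `L`. -/
theorem statement2 (SS : SchreierSystem) (ξ ζ : Ordinal) (hξ : ξ < omega1) (hζ : ζ < omega1) :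
    ∃ L : ℕ → ℕ, StrictMono L ∧
      ∀ L' : ℕ → ℕ, StrictMono L' → (∀ n : ℕ, L n ≤ L' n) →
        famMap L' (famOp (SS.S ξ) (SS.S ζ)) ⊆ SS.S (ζ + ξ) := by
  obtain ⟨L, hL, hthreshold⟩ := SS.exists_isSpreadThreshold hζ hξ
  refine ⟨L, hL, fun L' hL' hLL' => ?_⟩
  rintro _ ⟨E, hE, rfl⟩
  exact hthreshold E hE L' hL' fun k _ => hLL' k
end
end

section
/- Let 0 ≤ ξ, ζ < ω₁ be countable ordinals and let (F_i)_{i∈ℕ} be a successive sequence (F_1 < F_2 < ⋯) of members of 𝓢_ζ. Then there exists an infinite N ⊆ ℕ such that whenever E ∈ 𝓢_ξ(N), the union ∪_{i∈E} F_i belongs to 𝓢_{ζ+ξ}. -/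
open Filter Topology

noncomputable section

/-!
Call `N` good for `ξ` (`UnionsMem`) if `⋃_{i ∈ N(E)} F_i ∈ 𝓢_{ζ+ξ}` for every `E ∈ 𝓢_ξ`; good
subsequences exist by induction on `ξ`, for all successive sequences `F` in `𝓢_ζ` at once.
For `ξ = 0` take `N = ℕ`.
For `ξ + 1`, take `N` good for `ξ` and thin it out so that `min F_{N(m)} ≥ m`: a set
`E₁ ∪ ⋯ ∪ Eₙ ∈ 𝓢₁[𝓢_ξ]` is sent to the union of the `n` successive blocks `⋃_{i ∈ Eₖ} F_{N(i)}`,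
which lie in `𝓢_{ζ+ξ}` and above `n`, so that (after discarding the empty blocks) the union lies in
`𝓢₁[𝓢_{ζ+ξ}] = 𝓢_{ζ+ξ+1}`. For a limit `ξ`, refine successively to `N₀ ⊇ N₁ ⊇ ⋯` with `Nₙ`
good for `ξₙ` and diagonalise: above `n` the diagonal is a spread of `Nₙ`, so it is still good for
sets of `𝓢_{ξₙ}` there. A last thinning pushes the unions so far out that their membership in
`𝓢_{ζ+ξₙ}` implies membership in `𝓢_{ζ+ξ}`.
-/

open Finset

def IsSpreading (𝓕 : Set (Finset ℕ)) : Prop :=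
  ∀ E ∈ 𝓕, ∀ g : ℕ → ℕ, StrictMonoOn g E → (∀ a ∈ E, a ≤ g a) → E.image g ∈ 𝓕

def Successive (F : ℕ → Finset ℕ) : Prop :=
  ∀ m n : ℕ, m < n → ∀ a ∈ F m, ∀ b ∈ F n, a < b

namespace Successive

variable {F : ℕ → Finset ℕ}

lemma comp (hF : Successive F) {N : ℕ → ℕ} (hN : StrictMono N) : Successive (F ∘ N) :=
  fun _ _ hmn => hF _ _ (hN hmn)

lemma eventually_le (hF : Successive F) (T : ℕ) : ∀ᶠ k in atTop, ∀ a ∈ F k, T ≤ a := by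
  have hnot : ∀ b, ∀ᶠ k in atTop, b ∉ F k := by
    intro b
    by_cases hb : ∃ k₀, b ∈ F k₀
    · obtain ⟨k₀, hk₀⟩ := hb
      filter_upwards [eventually_gt_atTop k₀] with k hk hbk
      exact lt_irrefl b (hF k₀ k hk b hk₀ b hbk)
    · push Not at hb
      exact Eventually.of_forall hb
  filter_upwards [(eventually_all_finset (range T)).2 fun b _ => hnot b] with k hk a ha
  by_contra! h
  exact hk a (mem_range.2 h) ha

lemma exists_subseq_le (hF : Successive F) {N : ℕ → ℕ} (hN : StrictMono N) (t : ℕ → ℕ) :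
    ∃ g, StrictMono g ∧ ∀ m, ∀ a ∈ F (N (g m)), t m ≤ a :=
  extraction_forall_of_eventually fun m => hN.tendsto_atTop.eventually (hF.eventually_le (t m))

end Successive

lemma sInf_image_of_strictMonoOn {s : Finset ℕ} (hs : s.Nonempty) {g : ℕ → ℕ}
    (hg : StrictMonoOn g s) : sInf (↑(s.image g) : Set ℕ) = g (sInf ↑s) := by
  rw [coe_image, hg.monotoneOn.map_csInf (by exact_mod_cast hs)]

lemma IsSpreading.famOp {𝓕 𝓖 : Set (Finset ℕ)} (h𝓕 : IsSpreading 𝓕) (h𝓖 : IsSpreading 𝓖) :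
    IsSpreading (famOp 𝓕 𝓖) := by
  rintro _ ⟨n, Es, hmem, hne, hsucc, hmins, rfl⟩ g hg hge
  have hsub : ∀ i < n, Es i ⊆ (range n).biUnion Es :=
    fun i hi => subset_biUnion_of_mem Es (mem_range.2 hi)
  have hgsub : ∀ i < n, StrictMonoOn g (Es i) := fun i hi => hg.mono (coe_subset.2 (hsub i hi))
  refine ⟨n, fun i => (Es i).image g,
    fun i hi => h𝓖 _ (hmem i hi) g (hgsub i hi) fun a ha => hge a (hsub i hi ha),
    fun i hi => (hne i hi).image g, ?_, ?_, by rw [biUnion_image]⟩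
  · intro i j hij hj _ hx _ hy
    obtain ⟨a, ha, rfl⟩ := mem_image.1 hx
    obtain ⟨b, hb, rfl⟩ := mem_image.1 hy
    exact hg (hsub i (hij.trans hj) ha) (hsub j hj hb) (hsucc i j hij hj a ha b hb)
  · have hmins_sub : (range n).image (fun i => sInf (Es i : Set ℕ)) ⊆ (range n).biUnion Es := by
      intro x hx
      obtain ⟨i, hi, rfl⟩ := mem_image.1 hx
      exact hsub i (mem_range.1 hi) (hne i (mem_range.1 hi)).csInf_mem
    have h := h𝓕 _ hmins g (hg.mono (coe_subset.2 hmins_sub)) fun a ha => hge a (hmins_sub ha)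
    rw [image_image] at h
    convert h using 1
    exact image_congr fun i hi =>
      sInf_image_of_strictMonoOn (hne i (mem_range.1 hi)) (hgsub i (mem_range.1 hi))

lemma isSpreading_schreierOne : IsSpreading schreierOne := by
  intro E hE g _ hge x hx
  obtain ⟨a, ha, rfl⟩ := mem_image.1 hx
  exact card_image_le.trans ((hE a ha).trans (hge a ha))

section Assembly

variable {𝓖 : Set (Finset ℕ)} {G : ℕ → Finset ℕ}

lemma exists_nonempty_pieces : ∀ {n : ℕ}, (∀ i < n, G i ∈ 𝓖) →
    (∀ i j, i < j → j < n → ∀ a ∈ G i, ∀ b ∈ G j, a < b) →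
    ∃ m ≤ n, ∃ Es : ℕ → Finset ℕ, (∀ i < m, Es i ∈ 𝓖) ∧ (∀ i < m, (Es i).Nonempty) ∧
      (∀ i j, i < j → j < m → ∀ a ∈ Es i, ∀ b ∈ Es j, a < b) ∧
      (range m).biUnion Es = (range n).biUnion G
  | 0, _, _ => ⟨0, le_rfl, G, by simp, by simp, by simp, rfl⟩
  | n + 1, hG, hsucc => by
    obtain ⟨m, hmn, Es, hmem, hne, hEsucc, hU⟩ :=
      exists_nonempty_pieces (n := n) (fun i hi => hG i (by omega))
        fun i j hij hj => hsucc i j hij (by omega)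
    rcases (G n).eq_empty_or_nonempty with hGn | hGn
    · refine ⟨m, by omega, Es, hmem, hne, hEsucc, ?_⟩
      rw [range_add_one, biUnion_insert, hGn, empty_union, hU]
    refine ⟨m + 1, by omega, fun i => if i < m then Es i else G n, ?_, ?_, ?_, ?_⟩
    · intro i _
      dsimp only
      split_ifs with h
      exacts [hmem i h, hG n (lt_add_one n)]
    · intro i _
      dsimp only
      split_ifs with h
      exacts [hne i h, hGn]
    · intro i j hij hj a ha b hb
      have hi : i < m := by omega
      dsimp only at ha hb
      rw [if_pos hi] at ha
      split_ifs at hb with h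
      · exact hEsucc i j hij h a ha b hb
      · obtain ⟨k, hk, hak⟩ := mem_biUnion.1 (hU ▸ mem_biUnion.2 ⟨i, mem_range.2 hi, ha⟩)
        exact hsucc k n (mem_range.1 hk) (lt_add_one n) a hak b hb
    · rw [range_add_one, range_add_one, biUnion_insert, biUnion_insert, if_neg (lt_irrefl m),
        ← hU]
      congr 1
      exact biUnion_congr rfl fun i hi => if_pos (mem_range.1 hi)

lemma biUnion_mem_famOp_schreierOne {n : ℕ} (hG : ∀ i < n, G i ∈ 𝓖)
    (hsucc : ∀ i j, i < j → j < n → ∀ a ∈ G i, ∀ b ∈ G j, a < b)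
    (hge : ∀ i < n, ∀ a ∈ G i, n ≤ a) :
    (range n).biUnion G ∈ famOp schreierOne 𝓖 := by
  obtain ⟨m, hmn, Es, hmem, hne, hEsucc, hU⟩ := exists_nonempty_pieces hG hsucc
  refine ⟨m, Es, hmem, hne, hEsucc, ?_, hU.symm⟩
  intro x hx
  obtain ⟨i, hi, rfl⟩ := mem_image.1 hx
  obtain ⟨k, hk, hxk⟩ :=
    mem_biUnion.1 (hU ▸ mem_biUnion.2 ⟨i, hi, (hne i (mem_range.1 hi)).csInf_mem⟩)
  calc _ ≤ (range m).card := card_image_le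
    _ ≤ n := by simpa using hmn
    _ ≤ _ := hge k (mem_range.1 hk) _ hxk

end Assembly

lemma le_of_mem_of_mins_mem_schreierOne {n : ℕ} {Es : ℕ → Finset ℕ}
    (hne : ∀ i < n, (Es i).Nonempty)
    (hsucc : ∀ i j, i < j → j < n → ∀ a ∈ Es i, ∀ b ∈ Es j, a < b)
    (hmins : (range n).image (fun i => sInf (Es i : Set ℕ)) ∈ schreierOne) :
    ∀ i < n, ∀ a ∈ Es i, n ≤ a := by
  intro i hi a ha
  have hinj : Set.InjOn (fun i => sInf (Es i : Set ℕ)) ↑(range n) :=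
    StrictMonoOn.injOn fun i hi j hj hij => hsucc i j hij (mem_range.1 hj) _
      (hne i (mem_range.1 hi)).csInf_mem _ (hne j (mem_range.1 hj)).csInf_mem
  calc n = ((range n).image fun i => sInf (Es i : Set ℕ)).card := by
        rw [card_image_of_injOn hinj, card_range]
    _ ≤ sInf (Es i : Set ℕ) := hmins _ (mem_image_of_mem _ (mem_range.2 hi))
    _ ≤ a := Nat.sInf_le ha

namespace SchreierSystem

variable (SS : SchreierSystem)

lemma isSpreading : ∀ ξ < omega1, IsSpreading (SS.S ξ) := by
  intro ξ
  induction ξ using Ordinal.limitRecOn with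
  | zero =>
    intro _ E hE g _ _
    rw [SS.S_zero] at hE ⊢
    rcases hE with rfl | ⟨k, rfl⟩
    · exact Or.inl rfl
    · exact Or.inr ⟨g k, image_singleton g k⟩
  | add_one γ ih =>
    intro hγ
    rw [SS.S_succ]
    exact isSpreading_schreierOne.famOp (ih ((lt_add_one γ).trans hγ))
  | limit ξ hlim ih =>
    intro hξ E hE g hg hge
    rw [SS.S_limit ξ hξ hlim] at hE ⊢
    obtain ⟨n, hn, hEn⟩ := hE
    refine ⟨n, ?_, ih _ (SS.seq_lt ξ hξ hlim n) ((SS.seq_lt ξ hξ hlim n).trans hξ) E hEn g hg hge⟩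
    simp only [mem_image, forall_exists_index, and_imp, forall_apply_eq_imp_iff₂]
    exact fun a ha => (hn a ha).trans (hge a ha)

lemma empty_mem_s3 : ∀ ξ < omega1, (∅ : Finset ℕ) ∈ SS.S ξ := by
  intro ξ
  induction ξ using Ordinal.limitRecOn with
  | zero =>
    intro _
    rw [SS.S_zero]
    exact Or.inl rfl
  | add_one γ _ =>
    intro _
    rw [SS.S_succ]
    exact ⟨0, fun _ => ∅, by simp, by simp, by simp, by simp [schreierOne], by simp⟩
  | limit ξ hlim ih =>
    intro hξ
    rw [SS.S_limit ξ hξ hlim]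
    exact ⟨0, by simp, ih _ (SS.seq_lt ξ hξ hlim 0) ((SS.seq_lt ξ hξ hlim 0).trans hξ)⟩

lemma mem_succ_of_mem {γ : Ordinal} {E : Finset ℕ} (hE : E ∈ SS.S γ) (hpos : ∀ a ∈ E, 1 ≤ a) :
    E ∈ SS.S (γ + 1) := by
  rw [SS.S_succ]
  simpa using biUnion_mem_famOp_schreierOne (n := 1) (G := fun _ => E) (fun _ _ => hE)
    (fun i j hij hj => by omega) fun _ _ => hpos

lemma exists_mem_of_le : ∀ ξ < omega1, ∀ η ≤ ξ,
    ∃ p : ℕ, ∀ E ∈ SS.S η, (∀ a ∈ E, p ≤ a) → E ∈ SS.S ξ := by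
  intro ξ
  induction ξ using Ordinal.limitRecOn with
  | zero =>
    intro _ η hη
    rw [nonpos_iff_eq_zero.1 hη]
    exact ⟨0, fun E hE _ => hE⟩
  | add_one γ ih =>
    intro hγ η hη
    rcases hη.lt_or_eq with hη | rfl
    · obtain ⟨p, hp⟩ := ih ((lt_add_one γ).trans hγ) η (Order.lt_add_one_iff.1 hη)
      refine ⟨p + 1, fun E hE hEp => SS.mem_succ_of_mem (hp E hE fun a ha => ?_) fun a ha => ?_⟩
      all_goals have := hEp a ha; omega
    · exact ⟨0, fun E hE _ => hE⟩
  | limit ξ hlim ih =>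
    intro hξ η hη
    rcases hη.lt_or_eq with hη | rfl
    · rw [← SS.seq_iSup ξ hξ hlim] at hη
      obtain ⟨n, hn⟩ := exists_lt_of_lt_ciSup hη
      obtain ⟨p, hp⟩ :=
        ih _ (SS.seq_lt ξ hξ hlim n) ((SS.seq_lt ξ hξ hlim n).trans hξ) η hn.le
      refine ⟨max p n, fun E hE hEp => ?_⟩
      rw [SS.S_limit ξ hξ hlim]
      exact ⟨n, fun a ha => (le_max_right p n).trans (hEp a ha),
        hp E hE fun a ha => (le_max_left p n).trans (hEp a ha)⟩
    · exact ⟨0, fun E hE _ => hE⟩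

end SchreierSystem

lemma strictMono_diagonal_and_tail_subseq {G : ℕ → ℕ → ℕ} (hG0 : StrictMono (G 0))
    (hG : ∀ n, ∃ h, StrictMono h ∧ G (n + 1) = G n ∘ h) :
    StrictMono (fun m => G m m) ∧ ∀ n, ∃ j : ℕ → ℕ, ∀ m ≥ n, m ≤ j m ∧ G m m = G n (j m) := by
  have hle : ∀ n m, n ≤ m → ∃ h, StrictMono h ∧ G m = G n ∘ h := by
    intro n m hnm
    induction m, hnm using Nat.le_induction with
    | base => exact ⟨id, strictMono_id, rfl⟩
    | succ m _ ih =>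
      obtain ⟨h, hh, e⟩ := ih
      obtain ⟨h', hh', e'⟩ := hG m
      exact ⟨h ∘ h', hh.comp hh', by rw [e', e]; rfl⟩
  have hmono : ∀ n, StrictMono (G n) := fun n => by
    obtain ⟨h, hh, e⟩ := hle 0 n n.zero_le
    exact e ▸ hG0.comp hh
  refine ⟨strictMono_nat_of_lt_succ fun m => ?_, fun n => ?_⟩
  · obtain ⟨h, hh, e⟩ := hG m
    show G m m < G (m + 1) (m + 1)
    rw [e]
    exact hmono m ((lt_add_one m).trans_le hh.le_apply)
  · have : ∀ m, ∃ j, n ≤ m → m ≤ j ∧ G m m = G n j := by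
      intro m
      by_cases hnm : n ≤ m
      · obtain ⟨h, hh, e⟩ := hle n m hnm
        exact ⟨h m, fun _ => ⟨hh.le_apply, by rw [e]; rfl⟩⟩
      · exact ⟨0, fun h => absurd h hnm⟩
    choose j hj using this
    exact ⟨j, fun m hm => hj m hm⟩

def UnionsMem (SS : SchreierSystem) (ζ : Ordinal) (F : ℕ → Finset ℕ) (η : Ordinal) (N : ℕ → ℕ) :
    Prop :=
  ∀ E ∈ SS.S η, (E.image N).biUnion F ∈ SS.S (ζ + η)

section UnionsMem

variable {SS : SchreierSystem} {ζ η : Ordinal} {F : ℕ → Finset ℕ} {N : ℕ → ℕ}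

lemma UnionsMem.biUnion_mem_of_eqOn (hN : UnionsMem SS ζ F η N) (hη : η < omega1)
    {E : Finset ℕ} (hE : E ∈ SS.S η) {j : ℕ → ℕ} (hj : StrictMonoOn j E)
    (hjE : ∀ a ∈ E, a ≤ j a) {N' : ℕ → ℕ} (hN' : ∀ a ∈ E, N' a = N (j a)) :
    (E.image N').biUnion F ∈ SS.S (ζ + η) := by
  have hEN : E.image N' = (E.image j).image N := by
    rw [image_image]
    exact image_congr hN'
  rw [hEN]
  exact hN _ (SS.isSpreading η hη E hE j hj hjE)

lemma UnionsMem.comp (hN : UnionsMem SS ζ F η N) (hη : η < omega1) {g : ℕ → ℕ}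
    (hg : StrictMono g) : UnionsMem SS ζ F η (N ∘ g) :=
  fun _ hE => hN.biUnion_mem_of_eqOn hη hE (hg.strictMonoOn _) (fun _ _ => hg.le_apply)
    fun _ _ => rfl

lemma unionsMem_comp_iff {G g : ℕ → ℕ} :
    UnionsMem SS ζ (F ∘ G) η g ↔ UnionsMem SS ζ F η (G ∘ g) := by
  simp only [UnionsMem, ← image_image, image_biUnion]
  rfl

lemma unionsMem_zero (hζ : ζ < omega1) (hF : ∀ i, F i ∈ SS.S ζ) (N : ℕ → ℕ) :
    UnionsMem SS ζ F 0 N := by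
  intro E hE
  rw [SS.S_zero] at hE
  rw [add_zero]
  rcases hE with rfl | ⟨k, rfl⟩
  · simpa using SS.empty_mem_s3 ζ hζ
  · simpa using hF (N k)

lemma UnionsMem.succ (hN : UnionsMem SS ζ F η N) (hNmono : StrictMono N) (hF : Successive F)
    (hNF : ∀ m, ∀ a ∈ F (N m), m ≤ a) : UnionsMem SS ζ F (η + 1) N := by
  intro E hE
  rw [SS.S_succ] at hE
  obtain ⟨n, Es, hmem, hne, hsucc, hmins, rfl⟩ := hE
  rw [← add_assoc, SS.S_succ, biUnion_image, biUnion_biUnion]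
  refine biUnion_mem_famOp_schreierOne (fun i hi => hN _ (hmem i hi)) ?_ ?_
  · intro i j hij hj a ha b hb
    obtain ⟨_, hx, ha⟩ := mem_biUnion.1 ha
    obtain ⟨_, hy, hb⟩ := mem_biUnion.1 hb
    obtain ⟨c, hc, rfl⟩ := mem_image.1 hx
    obtain ⟨d, hd, rfl⟩ := mem_image.1 hy
    exact hF _ _ (hNmono (hsucc i j hij hj c hc d hd)) a ha b hb
  · intro i hi a ha
    obtain ⟨_, hx, ha⟩ := mem_biUnion.1 ha
    obtain ⟨c, hc, rfl⟩ := mem_image.1 hx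
    exact (le_of_mem_of_mins_mem_schreierOne hne hsucc hmins i hi c hc).trans (hNF c a ha)

lemma exists_unionsMem_of_isSuccLimit {ξ : Ordinal} (hξ : ξ < omega1) (hlim : Order.IsSuccLimit ξ)
    (hζ : ζ < omega1) (hF : Successive F) {G : ℕ → ℕ → ℕ}
    (hG : ∀ n, StrictMono (G n) ∧ UnionsMem SS ζ F (SS.seq ξ n) (G n))
    (hsub : ∀ n, ∃ h, StrictMono h ∧ G (n + 1) = G n ∘ h) :
    ∃ g, StrictMono g ∧ UnionsMem SS ζ F ξ g := by
  obtain ⟨hD, hDtail⟩ := strictMono_diagonal_and_tail_subseq (hG 0).1 hsub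
  have hseq : ∀ n, SS.seq ξ n < omega1 := fun n => (SS.seq_lt ξ hξ hlim n).trans hξ
  have htail : ∀ n, ∀ E ∈ SS.S (SS.seq ξ n), (∀ a ∈ E, n ≤ a) →
      (E.image fun m => G m m).biUnion F ∈ SS.S (ζ + SS.seq ξ n) := by
    intro n E hE hEn
    obtain ⟨j, hj⟩ := hDtail n
    refine (hG n).2.biUnion_mem_of_eqOn (hseq n) hE (fun a ha b hb hab => ?_)
      (fun a ha => (hj a (hEn a ha)).1) fun a ha => (hj a (hEn a ha)).2
    have h : G a a < G b b := hD hab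
    rw [(hj a (hEn a ha)).2, (hj b (hEn b hb)).2] at h
    exact (hG n).1.lt_iff_lt.1 h
  choose p hp using fun n => SS.exists_mem_of_le (ζ + ξ) (add_lt_omega1 hζ hξ)
    (ζ + SS.seq ξ n) (add_le_add_right (SS.seq_lt ξ hξ hlim n).le ζ)
  obtain ⟨g, hg, hgF⟩ := hF.exists_subseq_le hD fun m => (range (m + 1)).sup p
  refine ⟨_, hD.comp hg, fun E hE => ?_⟩
  rw [SS.S_limit ξ hξ hlim] at hE
  obtain ⟨n, hnE, hE⟩ := hE
  refine hp n _ ?_ fun a ha => ?_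
  · rw [← image_image]
    refine htail n _ (SS.isSpreading _ (hseq n) E hE g (hg.strictMonoOn _)
      fun _ _ => hg.le_apply) ?_
    simp only [mem_image, forall_exists_index, and_imp, forall_apply_eq_imp_iff₂]
    exact fun c hc => (hnE c hc).trans hg.le_apply
  · obtain ⟨_, hx, ha⟩ := mem_biUnion.1 ha
    obtain ⟨c, hc, rfl⟩ := mem_image.1 hx
    exact (le_sup (mem_range.2 (Nat.lt_succ_of_le (hnE c hc)))).trans (hgF c a ha)

end UnionsMem

theorem SchreierSystem.exists_strictMono_unionsMem (SS : SchreierSystem) {ζ : Ordinal}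
    (hζ : ζ < omega1) : ∀ ξ < omega1, ∀ F : ℕ → Finset ℕ, (∀ i, F i ∈ SS.S ζ) → Successive F →
      ∃ g, StrictMono g ∧ UnionsMem SS ζ F ξ g := by
  intro ξ
  induction ξ using Ordinal.limitRecOn with
  | zero => exact fun _ F hF _ => ⟨id, strictMono_id, unionsMem_zero hζ hF id⟩
  | add_one γ ih =>
    intro hγ F hFmem hF
    have hγ' : γ < omega1 := (lt_add_one γ).trans hγ
    obtain ⟨g₀, hg₀, hN₀⟩ := ih hγ' F hFmem hF
    obtain ⟨g₁, hg₁, hg₁F⟩ := hF.exists_subseq_le hg₀ id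
    exact ⟨g₀ ∘ g₁, hg₀.comp hg₁, (hN₀.comp hγ' hg₁).succ (hg₀.comp hg₁) hF hg₁F⟩
  | limit ξ hlim ih =>
    intro hξ F hFmem hF
    -- The hypothesis on `G` sits inside the existential so that `choose` yields a function of `G`.
    have step : ∀ n (G : ℕ → ℕ), ∃ g, StrictMono G →
        StrictMono g ∧ UnionsMem SS ζ F (SS.seq ξ n) (G ∘ g) := by
      intro n G
      by_cases hG : StrictMono G
      · obtain ⟨g, hg, hgF⟩ := ih _ (SS.seq_lt ξ hξ hlim n) ((SS.seq_lt ξ hξ hlim n).trans hξ)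
          (F ∘ G) (fun i => hFmem _) (hF.comp hG)
        exact ⟨g, fun _ => ⟨hg, unionsMem_comp_iff.1 hgF⟩⟩
      · exact ⟨id, fun h => absurd h hG⟩
    choose g hg using step
    let G : ℕ → ℕ → ℕ := fun n => Nat.rec (g 0 id) (fun k Gk => Gk ∘ g (k + 1) Gk) n
    have hG : ∀ n, StrictMono (G n) ∧ UnionsMem SS ζ F (SS.seq ξ n) (G n) := by
      intro n
      induction n with
      | zero => exact hg 0 id strictMono_id
      | succ k ih' =>
        exact ⟨ih'.1.comp (hg (k + 1) (G k) ih'.1).1, (hg (k + 1) (G k) ih'.1).2⟩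
    exact exists_unionsMem_of_isSuccLimit hξ hlim hζ hF hG
      fun n => ⟨_, (hg (n + 1) (G n) (hG n).1).1, rfl⟩

/-- For countable ordinals `ξ, ζ < ω₁` and a successive sequence
`F₁ < F₂ < ⋯` of members of `𝓢_ζ`, there is an infinite `N ⊆ ℕ` (given by its
increasing enumeration) such that whenever `E ∈ 𝓢_ξ(N)`, the union `⋃_{i∈E} F i`
belongs to `𝓢_{ζ+ξ}`. -/
theorem statement3 (SS : SchreierSystem) (ξ ζ : Ordinal) (hξ : ξ < omega1) (hζ : ζ < omega1)
    (F : ℕ → Finset ℕ) (hFmem : ∀ i : ℕ, F i ∈ SS.S ζ)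
    (hFsucc : ∀ m n : ℕ, m < n → ∀ a ∈ F m, ∀ b ∈ F n, a < b) :
    ∃ N : ℕ → ℕ, StrictMono N ∧
      ∀ E ∈ famMap N (SS.S ξ), E.biUnion F ∈ SS.S (ζ + ξ) := by
  obtain ⟨N, hN, hNF⟩ := SS.exists_strictMono_unionsMem hζ ξ hξ F hFmem hFsucc
  exact ⟨N, hN, fun _ ⟨E, hE, hEN⟩ => hEN ▸ hNF E hE⟩
end
end

section
/- Let X be a Banach space with a Schauder basis and let t > 1. Then X is not t-distortable if and only if D_t(X) = ω₁. -/
open Filter Topology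

noncomputable section

section Distortion

variable {V : Type*} [NormedAddCommGroup V] [NormedSpace ℝ V]

/-- `e` is a Schauder basis of `V`: every vector has a unique expansion
`x = Σ_i a i • e i` (convergence of the partial sums in norm). -/
def IsSchauderBasis (e : ℕ → V) : Prop :=
  ∀ x : V, ∃! a : ℕ → ℝ,
    Filter.Tendsto (fun n => ∑ i ∈ Finset.range n, a i • e i) Filter.atTop (nhds x)

/-- `u` is a block sequence of `e`: a sequence of nonzero vectors belonging to the spans
of successive finite subsets of the basis. -/
def IsBlockSeqOf (e : ℕ → V) (u : ℕ → V) : Prop :=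
  (∀ n, u n ≠ 0) ∧ ∃ E : ℕ → Finset ℕ,
    (∀ m n : ℕ, m < n → ∀ i ∈ E m, ∀ j ∈ E n, i < j) ∧
    ∀ n, u n ∈ Submodule.span ℝ (e '' (E n : Set ℕ))

/-- The closed linear span of the sequence `e` (the space with basis `e`). -/
def spanClosure (e : ℕ → V) : Set V :=
  closure ((Submodule.span ℝ (Set.range e) : Submodule ℝ V) : Set V)

/-- `N` is (the restriction to `Xs` of) a norm equivalent to `‖·‖` on `Xs`. -/
def IsEquivNormOn (Xs : Set V) (N : V → ℝ) : Prop :=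
  (∀ x ∈ Xs, ∀ y ∈ Xs, N (x + y) ≤ N x + N y) ∧
  (∀ (a : ℝ), ∀ x ∈ Xs, N (a • x) = |a| * N x) ∧
  (∃ c C : ℝ, 0 < c ∧ 0 < C ∧ ∀ x ∈ Xs, c * ‖x‖ ≤ N x ∧ N x ≤ C * ‖x‖)

/-- `N` is a `t`-`𝓕` distortion of the space with basis `e`: an equivalent norm such that
every normalized block sequence `(u_i)` admits `E ∈ 𝓕` and vectors `v, w` in
`span{u_i : i ∈ E}` with `‖v‖ = ‖w‖ = 1` and `N v / N w > t`. -/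
def IsFamDistortion (e : ℕ → V) (F : Set (Finset ℕ)) (t : ℝ) (N : V → ℝ) : Prop :=
  IsEquivNormOn (spanClosure e) N ∧
  ∀ u : ℕ → V, IsBlockSeqOf e u → (∀ n, ‖u n‖ = 1) →
    ∃ E : Finset ℕ, E ∈ F ∧ ∃ v w : V,
      v ∈ Submodule.span ℝ (u '' (E : Set ℕ)) ∧ w ∈ Submodule.span ℝ (u '' (E : Set ℕ)) ∧
      ‖v‖ = 1 ∧ ‖w‖ = 1 ∧ t * N w < N v

/-- The space with basis `e` is `t`-distortable: some equivalent norm witnesses, on every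
normalized block sequence, a ratio `> t` on some pair of normalized vectors of the span of
finitely many of its terms. -/
def IsTDistortable (e : ℕ → V) (t : ℝ) : Prop :=
  ∃ N : V → ℝ, IsEquivNormOn (spanClosure e) N ∧
    ∀ u : ℕ → V, IsBlockSeqOf e u → (∀ n, ‖u n‖ = 1) →
      ∃ E : Finset ℕ, ∃ v w : V,
        v ∈ Submodule.span ℝ (u '' (E : Set ℕ)) ∧ w ∈ Submodule.span ℝ (u '' (E : Set ℕ)) ∧
        ‖v‖ = 1 ∧ ‖w‖ = 1 ∧ t * N w < N v

/-- The distortion index `D_t`: the least countable `ξ` such that the space with basis `e`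
is `t`-`𝓢_ξ` distortable, and `ω₁` if there is no such `ξ`. -/
def Dt (SS : SchreierSystem) (e : ℕ → V) (t : ℝ) : Ordinal :=
  sInf ({ξ : Ordinal | ξ < omega1 ∧ ∃ N : V → ℝ, IsFamDistortion e (SS.S ξ) t N} ∪ {omega1})

/-- The index `AD`: the least countable `ξ` such that the space with basis `e` is
`𝓢_ξ` arbitrarily distortable (i.e. `t`-`𝓢_ξ` distortable for every `t ≥ 1`),
and `ω₁` if there is no such `ξ`. -/
def ADidx (SS : SchreierSystem) (e : ℕ → V) : Ordinal :=
  sInf ({ξ : Ordinal | ξ < omega1 ∧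
    ∀ t : ℝ, 1 ≤ t → ∃ N : V → ℝ, IsFamDistortion e (SS.S ξ) t N} ∪ {omega1})

end Distortion

/-!
Let `N` witness `t`-distortability. Lists of supports of finite normalized block sequences
carrying no `N`-distorted pair form a tree with countably many nodes. Since unit spheres of
finite-dimensional spaces are compact, an infinite branch would have a normalized block sequence
as a coordinatewise limit of its witnesses, and a distorted pair for the limit would survive in
some witness; so the tree is well founded and its rank `γ` is countable. If `N` failed on every
set of `𝓢_{γ+1}` spanned by some normalized block sequence `u`, the tree of finite sets of indices
of `u` without distorted pair would contain every set of `𝓢_{γ+1}`, hence have rank at least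
`γ + 1`, while mapping into the first tree, whose rank is `γ`.
-/

lemma omega1_eq_omega_one : omega1 = Ordinal.omega 1 := Cardinal.ord_aleph 1

lemma sInf_coe_image_add {F : Finset ℕ} (hF : F.Nonempty) (s : ℕ) :
    sInf ((F.image (· + s) : Finset ℕ) : Set ℕ) = sInf (F : Set ℕ) + s := by
  rw [Finset.coe_image]
  refine le_antisymm (Nat.sInf_le ⟨_, Nat.sInf_mem (by exact_mod_cast hF), rfl⟩) ?_
  refine le_csInf (by simpa using hF) ?_
  rintro _ ⟨a, ha, rfl⟩
  exact Nat.add_le_add_right (Nat.sInf_le ha) s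

lemma image_add_mem_schreierOne {E : Finset ℕ} (hE : E ∈ schreierOne) (s : ℕ) :
    E.image (· + s) ∈ schreierOne := by
  intro n hn
  obtain ⟨a, ha, rfl⟩ := Finset.mem_image.mp hn
  exact Finset.card_image_le.trans ((hE a ha).trans (Nat.le_add_right a s))

lemma image_add_mem_famOp {F G : Set (Finset ℕ)} (hF : ∀ E ∈ F, ∀ s, E.image (· + s) ∈ F)
    (hG : ∀ E ∈ G, ∀ s, E.image (· + s) ∈ G) {E : Finset ℕ} (hE : E ∈ famOp F G) (s : ℕ) :
    E.image (· + s) ∈ famOp F G := by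
  obtain ⟨n, Es, hmem, hne, hlt, hmin, rfl⟩ := hE
  refine ⟨n, fun i => (Es i).image (· + s), fun i hi => hG _ (hmem i hi) s,
    fun i hi => (hne i hi).image _, ?_, ?_, Finset.biUnion_image⟩
  · intro i j hij hj a ha b hb
    simp only [Finset.mem_image] at ha hb
    obtain ⟨a, ha, rfl⟩ := ha
    obtain ⟨b, hb, rfl⟩ := hb
    have := hlt i j hij hj a ha b hb
    omega
  · convert hF _ hmin s using 1
    rw [Finset.image_image]
    exact Finset.image_congr fun i hi => sInf_coe_image_add (hne i (Finset.mem_range.mp hi)) s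

lemma mem_famOp_of_mem_right {F G : Set (Finset ℕ)} {A : Finset ℕ} (hA : A ∈ G)
    (hAne : A.Nonempty) (hF : {sInf (A : Set ℕ)} ∈ F) : A ∈ famOp F G :=
  ⟨1, fun _ => A, fun _ _ => hA, fun _ _ => hAne, fun i j hij hj => by omega,
    by simpa using hF, by simp⟩

lemma union_mem_famOp {F G : Set (Finset ℕ)} {A B : Finset ℕ} (hA : A ∈ G) (hB : B ∈ G)
    (hAne : A.Nonempty) (hBne : B.Nonempty) (hAB : ∀ a ∈ A, ∀ b ∈ B, a < b)
    (hF : {sInf (A : Set ℕ), sInf (B : Set ℕ)} ∈ F) : A ∪ B ∈ famOp F G := by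
  have hrange : Finset.range 2 = {0, 1} := rfl
  refine ⟨2, fun i => if i = 0 then A else B, ?_, ?_, ?_, ?_, ?_⟩
  · intro i hi; interval_cases i <;> simpa
  · intro i hi; interval_cases i <;> simpa
  · intro i j hij hj a ha b hb
    obtain rfl : i = 0 := by omega
    obtain rfl : j = 1 := by omega
    exact hAB a ha b hb
  · simpa [hrange] using hF
  · simp [hrange]

namespace SchreierSystem

variable (SS : SchreierSystem)

theorem induction {P : Ordinal → Prop} (zero : P 0)
    (succ : ∀ η, η + 1 < omega1 → P η → P (η + 1))
    (limit : ∀ ξ < omega1, Order.IsSuccLimit ξ → (∀ n, P (SS.seq ξ n)) → P ξ) :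
    ∀ ξ < omega1, P ξ := by
  intro ξ
  induction ξ using Ordinal.limitRecOn with
  | zero => exact fun _ => zero
  | add_one η ih => exact fun h => succ η h (ih ((Order.lt_add_one_iff.mpr le_rfl).trans h))
  | limit ξ hlim ih =>
    exact fun h => limit ξ h hlim fun n =>
      ih _ (SS.seq_lt ξ h hlim n) ((SS.seq_lt ξ h hlim n).trans h)

theorem image_add_mem : ∀ ξ < omega1, ∀ E ∈ SS.S ξ, ∀ s : ℕ, E.image (· + s) ∈ SS.S ξ := by
  refine SS.induction ?_ (fun η hη ih => ?_) (fun ξ hξ hlim ih => ?_)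
  · intro E hE s
    rw [SS.S_zero] at hE ⊢
    rcases hE with rfl | ⟨n, rfl⟩ <;> simp
  · rw [SS.S_succ]
    exact fun E hE s => image_add_mem_famOp (fun E hE s => image_add_mem_schreierOne hE s) ih hE s
  · intro E hE s
    rw [SS.S_limit ξ hξ hlim] at hE ⊢
    obtain ⟨n, hmin, hE⟩ := hE
    refine ⟨n, ?_, ih n E hE s⟩
    simp only [Finset.mem_image]
    rintro _ ⟨m, hm, rfl⟩
    exact (hmin m hm).trans (Nat.le_add_right m s)

theorem singleton_mem : ∀ ξ < omega1, ∀ a : ℕ, 1 ≤ a → {a} ∈ SS.S ξ := by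
  refine SS.induction ?_ (fun η hη ih => ?_) (fun ξ hξ hlim ih => ?_)
  · intro a _
    rw [SS.S_zero]
    exact Or.inr ⟨a, rfl⟩
  · intro a ha
    rw [SS.S_succ]
    refine mem_famOp_of_mem_right (ih a ha) (Finset.singleton_nonempty a) ?_
    simpa [schreierOne] using ha
  · intro a ha
    rw [SS.S_limit ξ hξ hlim]
    exact ⟨1, by simpa using ha, ih 1 a ha⟩

/-- The second block starts at `3` so that the two minima `2 < min F + 3` form a set in `𝓢₁`. -/
theorem insert_two_image_add_three_mem {η : Ordinal} (hη : η + 1 < omega1) {F : Finset ℕ}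
    (hF : F ∈ SS.S η) : insert 2 (F.image (· + 3)) ∈ SS.S (η + 1) := by
  have hη' : η < omega1 := (Order.lt_add_one_iff.mpr le_rfl).trans hη
  rcases F.eq_empty_or_nonempty with rfl | hFne
  · simpa using SS.singleton_mem _ hη 2 (by norm_num)
  rw [SS.S_succ, Finset.insert_eq]
  refine union_mem_famOp (SS.singleton_mem η hη' 2 (by norm_num)) (SS.image_add_mem η hη' F hF 3)
    (Finset.singleton_nonempty 2) (hFne.image _) ?_ ?_
  · simp
  · rw [sInf_coe_image_add hFne]
    intro m hm
    simp only [Finset.coe_singleton, csInf_singleton, Finset.mem_insert,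
      Finset.mem_singleton] at hm
    refine (Finset.card_insert_le _ _).trans ?_
    rw [Finset.card_singleton]
    omega

end SchreierSystem

universe u

theorem Acc.rank_le_rank_of_map {α β : Type u} {r : α → α → Prop} {s : β → β → Prop}
    {f : α → β} (hf : ∀ a b, r a b → s (f a) (f b)) {a : α} (ha : Acc r a) (hb : Acc s (f a)) :
    ha.rank ≤ hb.rank := by
  induction ha with
  | intro a _ ih =>
    rw [Acc.rank_eq]
    refine Ordinal.iSup_le fun ⟨b, hba⟩ => Order.succ_le_of_lt ?_
    exact (ih b hba (hb.inv (hf b a hba))).trans_lt (hb.rank_lt_of_rel (hf b a hba))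

theorem Acc.rank_lt_omega_one {α : Type u} [Countable α] {r : α → α → Prop} {a : α}
    (ha : Acc r a) : ha.rank < Ordinal.omega 1 := by
  induction ha with
  | intro a _ ih =>
    rw [Acc.rank_eq]
    exact Ordinal.iSup_lt_omega_one fun b =>
      (Cardinal.isSuccLimit_omega 1).succ_lt (ih b.1 b.2)

def IsChildIn {α : Type*} (T : Set (List α)) (a b : List α) : Prop :=
  a ∈ T ∧ ∃ x, a = b ++ [x]

def increasingListsIn (C : Set (Finset ℕ)) : Set (List ℕ) :=
  {l | l.Pairwise (· < ·) ∧ l.toFinset ∈ C}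

theorem SchreierSystem.le_rank_increasingListsIn (SS : SchreierSystem) (C : Set (Finset ℕ)) :
    ∀ ξ < omega1, ∀ (l : List ℕ) (s : ℕ) (hl : Acc (IsChildIn (increasingListsIn C)) l),
      l.Pairwise (· < ·) → (∀ a ∈ l, a < s) →
      (∀ F ∈ SS.S ξ, l.toFinset ∪ F.image (· + s) ∈ C) → ξ ≤ hl.rank := by
  refine SS.induction (fun _ _ _ _ _ _ => zero_le) (fun η hη ih => ?_) (fun ξ hξ hlim ih => ?_)
  · intro l s hl hsort hs hC
    have hchild : IsChildIn (increasingListsIn C) (l ++ [s + 2]) l := by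
      refine ⟨⟨List.pairwise_append.mpr ⟨hsort, by simp, ?_⟩, ?_⟩, _, rfl⟩
      · simp only [List.mem_singleton]
        rintro a ha _ rfl
        exact (hs a ha).trans (by omega)
      · convert hC {2} (SS.singleton_mem _ hη 2 (by norm_num)) using 1
        ext x
        simp only [Finset.mem_union, Finset.mem_image, Finset.mem_singleton, List.mem_toFinset,
          List.mem_append, List.mem_singleton]
        grind
    have hrank : η ≤ (hl.inv hchild).rank := by
      refine ih _ (s + 3) _ hchild.1.1 ?_ fun F hF => ?_
      · simp only [List.mem_append, List.mem_singleton]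
        rintro a (ha | rfl)
        · exact (hs a ha).trans (by omega)
        · omega
      · convert hC _ (SS.insert_two_image_add_three_mem hη hF) using 1
        ext x
        simp only [Finset.mem_union, Finset.mem_image, Finset.mem_insert, List.mem_toFinset,
          List.mem_append, List.mem_singleton]
        grind
    exact Order.add_one_le_of_lt (hrank.trans_lt (hl.rank_lt_of_rel hchild))
  · intro l s hl hsort hs hC
    rw [← SS.seq_iSup ξ hξ hlim]
    refine Ordinal.iSup_le fun n => ih n l (s + n) hl hsort
      (fun a ha => (hs a ha).trans_le (Nat.le_add_right s n)) fun F hF => ?_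
    have hFn : F.image (· + n) ∈ SS.S ξ := by
      rw [SS.S_limit ξ hξ hlim]
      exact ⟨n, by simp, SS.image_add_mem _ ((SS.seq_lt ξ hξ hlim n).trans hξ) F hF n⟩
    convert hC _ hFn using 2
    rw [Finset.image_image]
    exact Finset.image_congr fun a _ => by simp only [Function.comp_apply]; omega

section Analysis

open Submodule

variable {V : Type*} [NormedAddCommGroup V] [NormedSpace ℝ V]

def HasDistortedPair (N : V → ℝ) (t : ℝ) (s : Set V) : Prop :=
  ∃ v w : V, v ∈ span ℝ s ∧ w ∈ span ℝ s ∧ ‖v‖ = 1 ∧ ‖w‖ = 1 ∧ t * N w < N v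

lemma HasDistortedPair.mono {N : V → ℝ} {t : ℝ} {s s' : Set V} (h : HasDistortedPair N t s)
    (hss' : s ⊆ s') : HasDistortedPair N t s' := by
  obtain ⟨v, w, hv, hw, h⟩ := h
  exact ⟨v, w, span_mono hss' hv, span_mono hss' hw, h⟩

lemma IsEquivNormOn.continuousOn {X : Submodule ℝ V} {N : V → ℝ}
    (hN : IsEquivNormOn (X : Set V) N) : ContinuousOn N X := by
  obtain ⟨hadd, -, _, C, -, hC, hbd⟩ := hN
  have hle : ∀ x ∈ X, ∀ y ∈ X, N x - N y ≤ C * ‖x - y‖ := fun x hx y hy => by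
    have := hadd _ (X.sub_mem hx hy) y hy
    rw [sub_add_cancel] at this
    linarith [(hbd _ (X.sub_mem hx hy)).2]
  refine (LipschitzOnWith.of_dist_le_mul (K := C.toNNReal) fun x hx y hy => ?_).continuousOn
  rw [Real.dist_eq, dist_eq_norm, Real.coe_toNNReal _ hC.le, abs_sub_le_iff]
  exact ⟨hle x hx y hy, by rw [norm_sub_rev]; exact hle y hy x hx⟩

lemma tendsto_inv_norm_smul {v : ℕ → V} {v₀ : V} (hv : Tendsto v atTop (𝓝 v₀)) (hv₀ : ‖v₀‖ = 1) :
    Tendsto (fun k => ‖v k‖⁻¹ • v k) atTop (𝓝 v₀) := by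
  simpa [hv₀] using (hv.norm.inv₀ (by simp [hv₀])).smul hv

theorem HasDistortedPair.eventually_of_tendsto {X : Submodule ℝ V} (hX : IsClosed (X : Set V))
    {N : V → ℝ} (hN : IsEquivNormOn (X : Set V) N) {t : ℝ} {s : ℕ → Set V} (hs : ∀ k, s k ⊆ X)
    {v w : ℕ → V} {v₀ w₀ : V} (hv : Tendsto v atTop (𝓝 v₀)) (hw : Tendsto w atTop (𝓝 w₀))
    (hvs : ∀ᶠ k in atTop, v k ∈ span ℝ (s k)) (hws : ∀ᶠ k in atTop, w k ∈ span ℝ (s k))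
    (hv₀ : ‖v₀‖ = 1) (hw₀ : ‖w₀‖ = 1) (hlt : t * N w₀ < N v₀) :
    ∀ᶠ k in atTop, HasDistortedPair N t (s k) := by
  have hvX : ∀ᶠ k in atTop, v k ∈ X := hvs.mono fun k hk => span_le.mpr (hs k) hk
  have hwX : ∀ᶠ k in atTop, w k ∈ X := hws.mono fun k hk => span_le.mpr (hs k) hk
  have hNv : Tendsto (fun k => N (‖v k‖⁻¹ • v k)) atTop (𝓝 (N v₀)) :=
    (hN.continuousOn v₀ (hX.mem_of_tendsto hv hvX)).tendsto.comp <| tendsto_nhdsWithin_iff.mpr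
      ⟨tendsto_inv_norm_smul hv hv₀, hvX.mono fun k hk => X.smul_mem _ hk⟩
  have hNw : Tendsto (fun k => N (‖w k‖⁻¹ • w k)) atTop (𝓝 (N w₀)) :=
    (hN.continuousOn w₀ (hX.mem_of_tendsto hw hwX)).tendsto.comp <| tendsto_nhdsWithin_iff.mpr
      ⟨tendsto_inv_norm_smul hw hw₀, hwX.mono fun k hk => X.smul_mem _ hk⟩
  filter_upwards [hvs, hws, (hNw.const_mul t).eventually_lt hNv hlt,
    hv.eventually_ne (norm_ne_zero_iff.mp (by simp [hv₀])),
    hw.eventually_ne (norm_ne_zero_iff.mp (by simp [hw₀]))] with k hvk hwk hltk hv0 hw0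
  exact ⟨_, _, smul_mem _ _ hvk, smul_mem _ _ hwk, norm_smul_inv_norm hv0,
    norm_smul_inv_norm hw0, hltk⟩

lemma exists_tendsto_mem_span_image {ι : Type*} {z : ι → V} {x : ℕ → ι → V}
    (hx : ∀ i, Tendsto (fun k => x k i) atTop (𝓝 (z i))) {E : Set ι} {v : V}
    (hv : v ∈ span ℝ (z '' E)) :
    ∃ v' : ℕ → V, Tendsto v' atTop (𝓝 v) ∧ ∀ k, v' k ∈ span ℝ (x k '' E) := by
  obtain ⟨T, hTE, c, rfl⟩ := (mem_span_image_iff_exists_fun ℝ).mp hv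
  refine ⟨fun k => ∑ i, c i • x k i, tendsto_finsetSum _ fun i _ => (hx i).const_smul (c i),
    fun k => sum_mem fun i _ => smul_mem _ _ (subset_span ⟨i, hTE i.2, rfl⟩)⟩

theorem exists_subseq_tendsto_of_isCompact {α : Type*} [TopologicalSpace α]
    [FirstCountableTopology α] {K : ℕ → Set α} (hK : ∀ i, IsCompact (K i)) {x : ℕ → ℕ → α}
    (hx : ∀ m, ∀ i < m, x m i ∈ K i) :
    ∃ z : ℕ → α, (∀ i, z i ∈ K i) ∧ ∃ φ : ℕ → ℕ, StrictMono φ ∧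
      ∀ i, Tendsto (fun k => x (φ k) i) atTop (𝓝 (z i)) := by
  let y : ℕ → ℕ → α := fun m i => if i < m then x m i else x (i + 1) i
  have hy : ∀ m, y m ∈ Set.univ.pi K := fun m i _ => by
    dsimp only [y]
    split_ifs with h
    exacts [hx m i h, hx _ i (Nat.lt_succ_self i)]
  obtain ⟨z, hz, φ, hφ, hlim⟩ := (isCompact_univ_pi hK).tendsto_subseq hy
  refine ⟨z, fun i => hz i trivial, φ, hφ, fun i => ?_⟩
  refine (((continuous_apply i).tendsto z).comp hlim).congr' ?_
  filter_upwards [eventually_gt_atTop i] with k hk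
  simp [y, hk.trans_le (hφ.id_le k)]

lemma isCompact_inter_sphere (S : Submodule ℝ V) [FiniteDimensional ℝ S] :
    IsCompact ((S : Set V) ∩ Metric.sphere 0 1) := by
  convert (isCompact_sphere (0 : S) 1).image continuous_subtype_val
  ext x
  simp [and_comm]

end Analysis

section BlockTree

open Submodule

variable {V : Type*} [NormedAddCommGroup V] [NormedSpace ℝ V] {e : ℕ → V} {N : V → ℝ} {t : ℝ}

lemma spanClosure_eq (e : ℕ → V) :
    spanClosure e = ((span ℝ (Set.range e)).topologicalClosure : Set V) :=
  (topologicalClosure_coe _).symm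

theorem exists_hasDistortedPair_of_successive (hN : IsEquivNormOn (spanClosure e) N)
    (hNd : ∀ u, IsBlockSeqOf e u → (∀ n, ‖u n‖ = 1) →
      ∃ E : Finset ℕ, HasDistortedPair N t (u '' E))
    {ℓ : ℕ → Finset ℕ} (hℓ : ∀ i j, i < j → ∀ a ∈ ℓ i, ∀ b ∈ ℓ j, a < b) :
    ∃ m, ∀ x : ℕ → V, (∀ i < m, x i ∈ span ℝ (e '' ℓ i) ∧ ‖x i‖ = 1) →
      HasDistortedPair N t (x '' Set.Iio m) := by
  by_contra! h
  choose x hx hbad using h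
  have hK : ∀ i, IsCompact ((span ℝ (e '' ℓ i) : Set V) ∩ Metric.sphere 0 1) := fun i =>
    have := FiniteDimensional.span_of_finite ℝ ((ℓ i).finite_toSet.image e)
    isCompact_inter_sphere _
  obtain ⟨z, hz, φ, hφ, hlim⟩ := exists_subseq_tendsto_of_isCompact hK
    fun m i hi => ⟨(hx m i hi).1, by simpa using (hx m i hi).2⟩
  have hz1 : ∀ i, ‖z i‖ = 1 := fun i => by simpa using (hz i).2
  obtain ⟨E, v, w, hv, hw, hv1, hw1, hlt⟩ :=
    hNd z ⟨fun i h => by simpa [h] using hz1 i, ℓ, hℓ, fun i => (hz i).1⟩ hz1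
  obtain ⟨v', hv', hv's⟩ := exists_tendsto_mem_span_image hlim hv
  obtain ⟨w', hw', hw's⟩ := exists_tendsto_mem_span_image hlim hw
  have hE : ∀ᶠ k in atTop, (E : Set ℕ) ⊆ Set.Iio (φ k) := by
    obtain ⟨M, hM⟩ := E.bddAbove
    filter_upwards [eventually_gt_atTop M] with k hk i hi
    exact (hM hi).trans_lt (hk.trans_le (hφ.id_le k))
  have hs : ∀ k, x (φ k) '' Set.Iio (φ k) ⊆ (span ℝ (Set.range e)).topologicalClosure := by
    rintro k _ ⟨i, hi, rfl⟩
    exact le_topologicalClosure _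
      (span_mono (Set.image_subset_range _ _) (hx (φ k) i hi).1)
  rw [spanClosure_eq] at hN
  obtain ⟨k, hk⟩ := (HasDistortedPair.eventually_of_tendsto (isClosed_topologicalClosure _) hN hs
    hv' hw' (hE.mono fun k hk => span_mono (Set.image_mono hk) (hv's k))
    (hE.mono fun k hk => span_mono (Set.image_mono hk) (hw's k)) hv1 hw1 hlt).exists
  exact hbad _ hk

def badBlockTree (e : ℕ → V) (N : V → ℝ) (t : ℝ) : Set (List (Finset ℕ)) :=
  {L | L.Pairwise (fun F G => ∀ a ∈ F, ∀ b ∈ G, a < b) ∧ ∃ x : ℕ → V,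
    (∀ i (hi : i < L.length), x i ∈ span ℝ (e '' L[i]) ∧ ‖x i‖ = 1) ∧
    ¬ HasDistortedPair N t (x '' Set.Iio L.length)}

lemma exists_eq_map_range_of_chain {α : Type*} {f : ℕ → List α} (h0 : f 0 = [])
    (hf : ∀ n, ∃ a, f (n + 1) = f n ++ [a]) : ∃ ℓ : ℕ → α, ∀ n, f n = (List.range n).map ℓ := by
  choose a ha using hf
  refine ⟨a, fun n => ?_⟩
  induction n with
  | zero => simp [h0]
  | succ n ih => rw [ha, ih, List.range_succ, List.map_append, List.map_singleton]

theorem acc_nil_badBlockTree (hN : IsEquivNormOn (spanClosure e) N)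
    (hNd : ∀ u, IsBlockSeqOf e u → (∀ n, ‖u n‖ = 1) →
      ∃ E : Finset ℕ, HasDistortedPair N t (u '' E)) :
    Acc (IsChildIn (badBlockTree e N t)) [] := by
  refine acc_iff_isEmpty_descending_chain.mpr ⟨fun ⟨f, hf0, hf⟩ => ?_⟩
  obtain ⟨ℓ, hℓ⟩ := exists_eq_map_range_of_chain hf0 fun n => (hf n).2
  have hmem : ∀ n, (List.range (n + 1)).map ℓ ∈ badBlockTree e N t := fun n => hℓ (n + 1) ▸ (hf n).1
  have hsucc : ∀ i j, i < j → ∀ a ∈ ℓ i, ∀ b ∈ ℓ j, a < b := fun i j hij => by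
    have := List.pairwise_iff_getElem.mp (hmem j).1 i j (by simp; omega) (by simp) hij
    simpa only [List.getElem_map, List.getElem_range] using this
  obtain ⟨m, hm⟩ := exists_hasDistortedPair_of_successive hN hNd hsucc
  obtain ⟨-, x, hx, hbad⟩ := hmem m
  simp only [List.length_map, List.length_range, List.getElem_map, List.getElem_range] at hx hbad
  exact hbad ((hm x fun i hi => hx i (by omega)).mono
    (Set.image_mono (Set.Iio_subset_Iio (Nat.le_succ m))))

lemma image_getD_Iio_length {α : Type*} (l : List α) (d : α) :
    (fun i => l.getD i d) '' Set.Iio l.length = {a | a ∈ l} := by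
  ext a
  simp only [Set.mem_image, Set.mem_Iio, Set.mem_ofPred_eq, List.mem_iff_getElem]
  constructor
  · rintro ⟨i, hi, rfl⟩
    exact ⟨i, hi, (List.getD_eq_getElem _ _ hi).symm⟩
  · rintro ⟨i, hi, rfl⟩
    exact ⟨i, hi, List.getD_eq_getElem _ _ hi⟩

lemma map_mem_badBlockTree {u : ℕ → V} {Eu : ℕ → Finset ℕ}
    (hEu : ∀ m n, m < n → ∀ i ∈ Eu m, ∀ j ∈ Eu n, i < j) (hu : ∀ n, u n ∈ span ℝ (e '' Eu n))
    (hnorm : ∀ n, ‖u n‖ = 1) {l : List ℕ}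
    (hl : l ∈ increasingListsIn {F | ¬ HasDistortedPair N t (u '' F)}) :
    l.map Eu ∈ badBlockTree e N t := by
  refine ⟨List.pairwise_map.mpr (hl.1.imp fun h => hEu _ _ h), fun i => u (l.getD i 0),
    fun i hi => ?_, ?_⟩
  · rw [List.length_map] at hi
    simp only [List.getD_eq_getElem _ _ hi, List.getElem_map]
    exact ⟨hu _, hnorm _⟩
  · have : (fun i => u (l.getD i 0)) '' Set.Iio l.length = u '' l.toFinset := by
      rw [← Set.image_image u, image_getD_Iio_length]
      simp
    rw [List.length_map, this]
    exact hl.2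

end BlockTree

theorem IsTDistortable.exists_isFamDistortion {V : Type*} [NormedAddCommGroup V]
    [NormedSpace ℝ V] {e : ℕ → V} {t : ℝ} (h : IsTDistortable e t) (SS : SchreierSystem) :
    ∃ ξ < omega1, ∃ N : V → ℝ, IsFamDistortion e (SS.S ξ) t N := by
  obtain ⟨N, hN, hNd⟩ := h
  have hacc := acc_nil_badBlockTree hN hNd
  have hγ : hacc.rank + 1 < omega1 := by
    rw [omega1_eq_omega_one]
    exact (Cardinal.isSuccLimit_omega 1).add_one_lt hacc.rank_lt_omega_one
  refine ⟨hacc.rank + 1, hγ, N, hN, fun u hu hnorm => ?_⟩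
  by_contra hbad
  obtain ⟨-, Eu, hEu, hspan⟩ := hu
  set C : Set (Finset ℕ) := {F | ¬ HasDistortedPair N t (u '' F)}
  have hmap : ∀ a b, IsChildIn (increasingListsIn C) a b →
      IsChildIn (badBlockTree e N t) (a.map Eu) (b.map Eu) := fun a b ⟨ha, x, hab⟩ =>
    ⟨map_mem_badBlockTree hEu hspan hnorm ha, Eu x, by simp [hab]⟩
  have hacc' : Acc (IsChildIn (increasingListsIn C)) [] :=
    Subrelation.accessible (r := InvImage (IsChildIn (badBlockTree e N t)) (List.map Eu))
      (hmap _ _) (InvImage.accessible _ hacc)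
  have hle := SS.le_rank_increasingListsIn C _ hγ [] 0 hacc' List.Pairwise.nil (by simp)
    fun F hF hp => hbad ⟨F, hF, show HasDistortedPair N t (u '' F) by simpa using hp⟩
  exact (Order.lt_add_one_iff.mpr le_rfl).not_ge
    (hle.trans (Acc.rank_le_rank_of_map hmap hacc' hacc))

lemma IsFamDistortion.isTDistortable {V : Type*} [NormedAddCommGroup V] [NormedSpace ℝ V]
    {e : ℕ → V} {F : Set (Finset ℕ)} {t : ℝ} {N : V → ℝ} (h : IsFamDistortion e F t N) :
    IsTDistortable e t :=
  ⟨N, h.1, fun u hu hnorm => (h.2 u hu hnorm).imp fun _ hE => hE.2⟩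

lemma Dt_eq_omega1_iff {V : Type*} [NormedAddCommGroup V] [NormedSpace ℝ V]
    (SS : SchreierSystem) (e : ℕ → V) (t : ℝ) :
    Dt SS e t = omega1 ↔ ∀ ξ < omega1, ∀ N, ¬ IsFamDistortion e (SS.S ξ) t N := by
  constructor
  · intro h ξ hξ N hN
    have : Dt SS e t ≤ ξ := csInf_le' (Or.inl ⟨hξ, N, hN⟩)
    exact (h ▸ this).not_gt hξ
  · intro h
    rw [Dt, Set.union_eq_right.mpr, csInf_singleton]
    rintro ξ ⟨hξ, N, hN⟩
    exact (h ξ hξ N hN).elim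

theorem statement4_general {X : Type*} [NormedAddCommGroup X] [NormedSpace ℝ X]
    (SS : SchreierSystem) (e : ℕ → X) (t : ℝ) :
    ¬ IsTDistortable e t ↔ Dt SS e t = omega1 := by
  rw [Dt_eq_omega1_iff]
  constructor
  · exact fun h ξ _ N hN => h hN.isTDistortable
  · intro h hT
    obtain ⟨ξ, hξ, N, hN⟩ := hT.exists_isFamDistortion SS
    exact h ξ hξ N hN

/-- A Banach space `X` with a Schauder basis and `t > 1` is not
`t`-distortable if and only if `D_t(X) = ω₁`. -/
theorem statement4 {X : Type*} [NormedAddCommGroup X] [NormedSpace ℝ X] [CompleteSpace X]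
    (SS : SchreierSystem) (e : ℕ → X) (he : IsSchauderBasis e) (t : ℝ) (ht : 1 < t) :
    ¬ IsTDistortable e t ↔ Dt SS e t = omega1 :=
  statement4_general SS e t
end
end
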